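/- A bi-directed graph G is Markov equivalent to a directed acyclic graph if and only if some (equivalently, every) minimally oriented graph G^min of G contains no bi-directed edges. -/

import Mathlib

/-- Possible edge types between an ordered pair of distinct vertices of a
simple mixed graph.  `arrowTo` at `(v, w)` means `v → w`, `arrowFrom` means
`v ← w`, `undir` means `v − w` and `bidir` means `v ↔ w`. -/
inductive EType : Type
  | none | undir | arrowTo | arrowFrom | bidir
deriving DecidableEq

/-- The edge type seen from the reversed ordered pair of vertices. -/
def EType.mirror : EType → EType
  | .none => .none
  | .undir => .undir
  | .arrowTo => .arrowFrom
  | .arrowFrom => .arrowTo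
  | .bidir => .bidir

/-- A simple mixed graph: at most one edge (undirected, directed or
bi-directed) between any two distinct vertices, and no self loops. -/
structure MixedGraph (V : Type) where
  E : V → V → EType
  no_loop : ∀ v, E v v = .none
  symm : ∀ v w, E w v = (E v w).mirror

/-- `(a, b, c)` are three consecutive vertices on the path `p`. -/
def ConsecTriple {V : Type} (p : List V) (a b c : V) : Prop :=
  ∃ l1 l2, p = l1 ++ a :: b :: c :: l2

namespace MixedGraph

variable {V : Type} (G : MixedGraph V)

/-- `v − w` is an edge of `G`. -/
def Undir (v w : V) : Prop := G.E v w = .undir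

/-- `v → w` is an edge of `G`. -/
def Dir (v w : V) : Prop := G.E v w = .arrowTo

/-- `v ↔ w` is an edge of `G`. -/
def Bidir (v w : V) : Prop := G.E v w = .bidir

/-- `v` and `w` are adjacent (joined by some edge). -/
def Adj (v w : V) : Prop := G.E v w ≠ .none

/-- The edge between `a` and `b` has an arrowhead at `b`. -/
def HeadAt (a b : V) : Prop := G.E a b = .arrowTo ∨ G.E a b = .bidir

/-- Closed boundary: `v` together with its adjacent vertices. -/
def Bd (v : V) : Set V := insert v {w | G.Adj v w}

/-- A set of vertices is complete if all of its pairs of distinct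
vertices are adjacent. -/
def Complete (S : Set V) : Prop := ∀ v ∈ S, ∀ w ∈ S, v ≠ w → G.Adj v w

/-- A vertex is simplicial if its closed boundary is complete. -/
def Simplicial (v : V) : Prop := G.Complete (G.Bd v)

/-- `v` is an ancestor of `w`: `v = w` or there is a directed path from
`v` to `w`. -/
def Anc (v w : V) : Prop := Relation.ReflTransGen G.Dir v w

/-- The set of ancestors of vertices in `C`. -/
def anSet (C : Set V) : Set V := {v | ∃ c ∈ C, G.Anc v c}

/-- `G` is an ancestral graph. -/
def Ancestral : Prop :=
  (∀ v w, G.Dir v w → ¬ G.Anc w v) ∧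
  (∀ v w, G.Undir v w → ∀ u, ¬ G.HeadAt u v) ∧
  (∀ v w, G.Bidir v w → ¬ G.Anc v w)

/-- The boundary containment property. -/
def BdContain : Prop :=
  (∀ v w, G.Undir v w → G.Bd v = G.Bd w) ∧
  (∀ v w, G.Dir v w → G.Bd v ⊆ G.Bd w)

/-- `b` is a collider between consecutive neighbours `a` and `c`. -/
def Collider (a b c : V) : Prop := G.HeadAt a b ∧ G.HeadAt c b

/-- A path: a list of distinct vertices, consecutive ones adjacent. -/
def IsPath (p : List V) : Prop := p.Nodup ∧ p.Chain' G.Adj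

/-- `p` is an m-connecting path given `C`: every non-collider on it is
outside `C` and every collider on it is an ancestor of `C`. -/
def IsMConnPath (C : Set V) (p : List V) : Prop :=
  G.IsPath p ∧
  ∀ a b c, ConsecTriple p a b c →
    (G.Collider a b c → b ∈ G.anSet C) ∧ (¬ G.Collider a b c → b ∉ C)

/-- `v` and `w` are m-connected given `C`. -/
def MConn (v w : V) (C : Set V) : Prop :=
  ∃ p, G.IsMConnPath C p ∧ p.head? = some v ∧ p.getLast? = some w

/-- `v` and `w` are m-separated given `C`. -/
def MSep (v w : V) (C : Set V) : Prop := ¬ G.MConn v w C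

/-- A maximal (ancestral) graph: every pair of distinct non-adjacent
vertices is m-separated given some set. -/
def Maximal : Prop :=
  ∀ v w, v ≠ w → ¬ G.Adj v w → ∃ C : Set V, v ∉ C ∧ w ∉ C ∧ G.MSep v w C

/-- `G` is a bi-directed graph. -/
def Bidirected : Prop := ∀ v w, G.E v w = .none ∨ G.E v w = .bidir

/-- `G` is an undirected graph. -/
def UndirectedG : Prop := ∀ v w, G.E v w = .none ∨ G.E v w = .undir

/-- `G` is a directed acyclic graph. -/
def IsDAG : Prop :=
  (∀ v w, G.E v w = .none ∨ G.E v w = .arrowTo ∨ G.E v w = .arrowFrom) ∧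
  (∀ v w, G.Dir v w → ¬ G.Anc w v)

/-- `G` and `H` have the same skeleton. -/
def SameSkeleton (H : MixedGraph V) : Prop := ∀ v w, G.Adj v w ↔ H.Adj v w

/-- `G` and `H` are Markov equivalent: their m-separation relations
coincide. -/
def MarkovEquiv (H : MixedGraph V) : Prop :=
  ∀ v w (C : Set V), v ≠ w → v ∉ C → w ∉ C → (G.MSep v w C ↔ H.MSep v w C)

open Classical in
/-- The edge map obtained from `G` by dropping all arrowheads at
simplicial vertices. -/
noncomputable def dropE (v w : V) : EType :=
  match G.E v w with
  | .none => .none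
  | .undir => .undir
  | .arrowTo => if G.Simplicial w then .undir else .arrowTo
  | .arrowFrom => if G.Simplicial v then .undir else .arrowFrom
  | .bidir =>
      if G.Simplicial v then (if G.Simplicial w then .undir else .arrowTo)
      else (if G.Simplicial w then .arrowFrom else .bidir)

/-- The graph obtained from `G` by dropping all arrowheads at simplicial
vertices; for a bi-directed graph `G` this is the simplicial graph `Gˢ`. -/
noncomputable def drop : MixedGraph V where
  E := G.dropE
  no_loop v := by simp [dropE, G.no_loop]
  symm v w := by
    unfold dropE
    rw [G.symm v w]
    cases h : G.E v w <;>
      simp only [EType.mirror] <;> split_ifs <;> simp_all [EType.mirror]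

open Classical in
/-- The edge map of the minimally oriented graph `G^min_<`: starting from
the simplicial graph, each bi-directed edge `v ↔ w` with `Bd v ⊆ Bd w`
and `v < w` is replaced by `v → w`. -/
noncomputable def gminE [LinearOrder V] (v w : V) : EType :=
  match G.dropE v w with
  | .bidir =>
      if G.Bd v ⊆ G.Bd w ∧ v < w then .arrowTo
      else if G.Bd w ⊆ G.Bd v ∧ w < v then .arrowFrom
      else .bidir
  | e => e

/-- The graph `G^min_<` produced by Algorithm 4.2 from `G` and the total
order on `V`. -/
noncomputable def gmin [LinearOrder V] : MixedGraph V where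
  E := G.gminE
  no_loop v := by
    have h := G.drop.no_loop v
    simp only [drop] at h
    simp [gminE, h]
  symm v w := by
    have h := G.drop.symm v w
    simp only [drop] at h
    unfold gminE
    rw [h]
    cases hE : G.dropE v w <;> simp only [EType.mirror]
    case bidir =>
      by_cases c1 : G.Bd v ⊆ G.Bd w ∧ v < w
      · have c2 : ¬ (G.Bd w ⊆ G.Bd v ∧ w < v) := fun h' => lt_asymm c1.2 h'.2
        simp [c1, c2, EType.mirror]
      · by_cases c2 : G.Bd w ⊆ G.Bd v ∧ w < v
        · simp [c1, c2, EType.mirror]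
        · simp [c1, c2, EType.mirror]

/-- Total number of arrowheads of `G`: the number of directed edges plus
twice the number of bi-directed edges. -/
noncomputable def arr : ℕ :=
  {p : V × V | G.Dir p.1 p.2}.ncard + {p : V × V | G.Bidir p.1 p.2}.ncard

end MixedGraph

/-- `Gm` is a minimally oriented graph for `G`. -/
def MinOriented {V : Type} (G Gm : MixedGraph V) : Prop :=
  Gm.Ancestral ∧ Gm.Maximal ∧ G.MarkovEquiv Gm ∧
  ∀ H : MixedGraph V, H.Ancestral → H.Maximal → G.MarkovEquiv H → Gm.arr ≤ H.arr

/-!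
For a bi-directed graph, `v` and `w` are m-connected given `C` exactly when they are connected in
the skeleton restricted to `C ∪ {v, w}`. The same holds for every orientation of the skeleton
without bi-directed edges whose tails point up the boundary preorder (a tail at `a` on `a *- b`
forces `Bd a ⊆ Bd b`) and whose undirected edges carry no arrowheads at their endpoints: between
consecutive colliders an m-connecting path first descends and then ascends this preorder, and each
collider is an ancestor, hence a boundary subset, of a vertex of `C`. Such orientations are
therefore maximal ancestral graphs Markov equivalent to `G`.

An edge `v ↔ w` with incomparable boundaries lies in two unshielded colliders `x ↔ v ↔ w` and
`v ↔ w ↔ y`, so it is bi-directed in every Markov equivalent graph with the same skeleton, e.g. in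
a Markov equivalent DAG (DAGs are maximal) and in `G^min`. If no such edge exists, orienting the
skeleton along a linear extension of strict boundary inclusion gives a Markov equivalent DAG.
Dropping its arrowheads at simplicial vertices leaves exactly one arrowhead on each edge with a
non-simplicial endpoint; every Markov equivalent ancestral graph needs one there too, so a
bi-directed edge in `G^min` would contradict minimality.
-/

section Lists

variable {V : Type} {p q : List V} {a b c v w : V}

lemma consecTriple_iff_infix : ConsecTriple p a b c ↔ [a, b, c] <:+: p :=
  ⟨fun ⟨s, t, h⟩ => ⟨s, t, by simp [h]⟩, fun ⟨s, t, h⟩ => ⟨s, t, by simp [← h]⟩⟩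

lemma ConsecTriple.of_infix (h : ConsecTriple q a b c) (hq : q <:+: p) : ConsecTriple p a b c :=
  consecTriple_iff_infix.mpr ((consecTriple_iff_infix.mp h).trans hq)

lemma ConsecTriple.reverse (h : ConsecTriple p a b c) : ConsecTriple p.reverse c b a :=
  consecTriple_iff_infix.mpr (by simpa using List.reverse_infix.mpr (consecTriple_iff_infix.mp h))

lemma ConsecTriple.cons (h : ConsecTriple p a b c) (x : V) : ConsecTriple (x :: p) a b c :=
  let ⟨s, t, hst⟩ := h
  ⟨x :: s, t, by simp [hst]⟩

lemma ConsecTriple.eq_of_triple {x y z : V} (h : ConsecTriple [x, y, z] a b c) :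
    a = x ∧ b = y ∧ c = z := by
  obtain ⟨s, t, hst⟩ := h
  obtain rfl : s = [] := List.eq_nil_of_length_eq_zero (by
    have := congrArg List.length hst
    simp only [List.length_cons, List.length_append, List.length_nil] at this
    omega)
  simp only [List.nil_append, List.cons.injEq] at hst
  exact ⟨hst.1.symm, hst.2.1.symm, hst.2.2.1.symm⟩

lemma ConsecTriple.ne (h : ConsecTriple p a b c) (hp : p.Nodup) : a ≠ c := by
  obtain ⟨s, t, rfl⟩ := h
  rintro rfl
  exact (List.nodup_cons.mp hp.of_append_right).1 (by simp)

lemma ConsecTriple.mem_tail (h : ConsecTriple p a b c) : b ∈ p.tail := by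
  obtain ⟨s, t, rfl⟩ := h
  cases s <;> simp

lemma ConsecTriple.ne_of_head? (h : ConsecTriple p a b c) (hp : p.Nodup)
    (hv : p.head? = some v) : b ≠ v := by
  rintro rfl
  obtain ⟨p', rfl⟩ := List.head?_eq_some_iff.mp hv
  exact (List.nodup_cons.mp hp).1 h.mem_tail

lemma ConsecTriple.ne_of_getLast? (h : ConsecTriple p a b c) (hp : p.Nodup)
    (hw : p.getLast? = some w) : b ≠ w :=
  h.reverse.ne_of_head? (List.nodup_reverse.mpr hp) (by rwa [List.head?_reverse])

lemma ConsecTriple.rel_left {R : V → V → Prop} (h : ConsecTriple p a b c) (hp : p.IsChain R) :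
    R a b := by
  obtain ⟨s, t, rfl⟩ := h
  simpa using hp.infix (l₁ := [a, b]) ⟨s, c :: t, by simp⟩

lemma ConsecTriple.rel_right {R : V → V → Prop} (h : ConsecTriple p a b c) (hp : p.IsChain R) :
    R b c := by
  obtain ⟨s, t, rfl⟩ := h
  simpa using hp.infix (l₁ := [b, c]) ⟨s ++ [a], t, by simp⟩

lemma eq_or_eq_or_consecTriple_of_mem (hb : b ∈ p) (hv : p.head? = some v)
    (hw : p.getLast? = some w) : b = v ∨ b = w ∨ ∃ a c, ConsecTriple p a b c := by
  obtain ⟨s, t, rfl⟩ := List.append_of_mem hb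
  rcases List.eq_nil_or_concat s with rfl | ⟨s', a, rfl⟩
  · simp_all
  rcases t with _ | ⟨c, t'⟩
  · simp_all
  · exact Or.inr (Or.inr ⟨a, c, s', t', by simp⟩)

lemma List.IsChain.shortcut {R : V → V → Prop} {s t : List V}
    (h : (s ++ a :: b :: c :: t).IsChain R) (hac : R a c) : (s ++ a :: c :: t).IsChain R := by
  simp only [List.isChain_append_cons_cons, List.isChain_cons_cons] at h ⊢
  exact ⟨h.1, hac, h.2.2.2⟩

end Lists

namespace SimpleGraph

variable {V : Type} {G : SimpleGraph V} {v w : V}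

lemma reachable_of_isChain {p : List V} (hp : p.IsChain G.Adj) (hv : p.head? = some v)
    (hw : p.getLast? = some w) : G.Reachable v w := by
  obtain ⟨t, rfl⟩ := List.head?_eq_some_iff.mp hv
  rw [reachable_iff_reflTransGen]
  exact List.relationReflTransGen_of_exists_isChain_cons t hp
    (Option.some_injective _ ((List.getLast?_eq_some_getLast (List.cons_ne_nil v t)).symm.trans hw))

lemma Reachable.exists_path (h : G.Reachable v w) :
    ∃ p : List V, p.Nodup ∧ p.IsChain G.Adj ∧ p.head? = some v ∧ p.getLast? = some w := by
  classical
  obtain ⟨q⟩ := h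
  refine ⟨q.toPath.1.support, q.toPath.2.support_nodup, q.toPath.1.isChain_adj_support, ?_, ?_⟩
  · simp [List.head?_eq_some_head (Walk.support_ne_nil _)]
  · simp [List.getLast?_eq_some_getLast (Walk.support_ne_nil _)]

/-- A shortest path has no chords between vertices two steps apart. -/
lemma Reachable.exists_chordless_path (h : G.Reachable v w) :
    ∃ p : List V, p.Nodup ∧ p.IsChain G.Adj ∧ p.head? = some v ∧ p.getLast? = some w ∧
      ∀ a b c, ConsecTriple p a b c → ¬ G.Adj a c := by
  obtain ⟨p, hp⟩ := h.exists_path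
  induction hn : p.length using Nat.strong_induction_on generalizing p with
  | _ n ih =>
  obtain ⟨hnd, hch, hv, hw⟩ := hp
  by_cases hchord : ∃ a b c, ConsecTriple p a b c ∧ G.Adj a c
  · obtain ⟨a, b, c, ⟨s, t, rfl⟩, hac⟩ := hchord
    refine ih _ (by simp [← hn]) (s ++ a :: c :: t) ⟨?_, hch.shortcut hac, ?_, ?_⟩ rfl
    · exact (((List.sublist_cons_self b (c :: t)).cons_cons a).append_left s).nodup hnd
    · cases s <;> simpa using hv
    · simpa using hw
  · push Not at hchord
    exact ⟨p, hnd, hch, hv, hw, hchord⟩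

end SimpleGraph

namespace MixedGraph

variable {V : Type} {G H K D : MixedGraph V} {p l : List V} {A C S T : Set V}
  {a b c u v w x y r pr : V}

section Edges

lemma adj_comm : G.Adj a b ↔ G.Adj b a := by
  unfold Adj; rw [G.symm a b]; cases G.E a b <;> simp [EType.mirror]

lemma Adj.symm (h : G.Adj a b) : G.Adj b a := adj_comm.mp h

lemma Adj.ne (h : G.Adj a b) : a ≠ b := by
  rintro rfl; exact h (G.no_loop a)

lemma HeadAt.adj (h : G.HeadAt a b) : G.Adj a b := by
  unfold HeadAt at h; unfold Adj; rcases h with h | h <;> simp [h]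

lemma Dir.headAt (h : G.Dir a b) : G.HeadAt a b := Or.inl h

lemma bidir_iff : G.Bidir a b ↔ G.HeadAt a b ∧ G.HeadAt b a := by
  unfold Bidir HeadAt; rw [G.symm a b]; cases G.E a b <;> simp [EType.mirror]

lemma dir_iff : G.Dir a b ↔ G.HeadAt a b ∧ ¬ G.HeadAt b a := by
  unfold Dir HeadAt; rw [G.symm a b]; cases G.E a b <;> simp [EType.mirror]

lemma undir_iff : G.Undir a b ↔ G.Adj a b ∧ ¬ G.HeadAt a b ∧ ¬ G.HeadAt b a := by
  unfold Undir Adj HeadAt; rw [G.symm a b]; cases G.E a b <;> simp [EType.mirror]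

lemma mem_bd_iff : x ∈ G.Bd v ↔ x = v ∨ G.Adj v x := Iff.rfl

lemma self_mem_bd (v : V) : v ∈ G.Bd v := Set.mem_insert v _

lemma Adj.mem_bd (h : G.Adj v x) : x ∈ G.Bd v := Set.mem_insert_of_mem v h

lemma adj_of_mem_bd (h : x ∈ G.Bd v) (hne : x ≠ v) : G.Adj v x :=
  (mem_bd_iff.mp h).resolve_left hne

lemma mem_bd_comm : x ∈ G.Bd v ↔ v ∈ G.Bd x := by
  simp only [mem_bd_iff, eq_comm (a := x), adj_comm (a := v)]

lemma bd_congr (h : ∀ a b, K.Adj a b ↔ G.Adj a b) : K.Bd = G.Bd := by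
  ext v x; simp only [mem_bd_iff, h]

lemma simplicial_congr (h : ∀ a b, K.Adj a b ↔ G.Adj a b) :
    K.Simplicial v ↔ G.Simplicial v := by
  simp only [Simplicial, Complete, bd_congr h, h]

lemma Simplicial.bd_subset (hs : G.Simplicial a) (h : G.Adj a b) : G.Bd a ⊆ G.Bd b := by
  intro x hx
  by_cases hxb : x = b
  · subst hxb; exact self_mem_bd x
  · exact mem_bd_comm.mp (hs x hx b h.mem_bd hxb).mem_bd

lemma Simplicial.of_bd_eq (hs : G.Simplicial a) (he : G.Bd a = G.Bd b) : G.Simplicial b := by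
  rwa [Simplicial, ← he]

lemma Adj.exists_of_not_bd_subset (hvw : G.Adj v w) (h : ¬ G.Bd v ⊆ G.Bd w) :
    ∃ x, G.Adj x v ∧ ¬ G.Adj x w ∧ x ≠ w := by
  obtain ⟨x, hxv, hxw⟩ := Set.not_subset.mp h
  rcases mem_bd_iff.mp hxv with rfl | hvx
  · exact absurd (mem_bd_comm.mp hvw.mem_bd) hxw
  · refine ⟨x, hvx.symm, fun h => hxw (mem_bd_comm.mp h.mem_bd), ?_⟩
    rintro rfl
    exact hxw (self_mem_bd x)

lemma exists_adj_adj_of_not_simplicial (h : ¬ G.Simplicial b) :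
    ∃ x y, G.Adj x b ∧ G.Adj b y ∧ x ≠ y ∧ ¬ G.Adj x y := by
  simp only [Simplicial, Complete, not_forall] at h
  obtain ⟨x, hx, y, hy, hxy, hnxy⟩ := h
  rcases mem_bd_iff.mp hx with rfl | hbx
  · exact absurd ((mem_bd_iff.mp hy).resolve_left (Ne.symm hxy)) hnxy
  rcases mem_bd_iff.mp hy with rfl | hby
  · exact absurd hbx.symm hnxy
  exact ⟨x, y, hbx.symm, hby, hxy, hnxy⟩

end Edges

section Ancestors

lemma le_of_anc {α : Type*} [Preorder α] {f : V → α} (hf : ∀ a b, G.Dir a b → f a < f b)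
    (h : G.Anc a b) : f a ≤ f b := by
  induction h with
  | refl => exact le_rfl
  | tail _ hd ih => exact ih.trans (hf _ _ hd).le

lemma not_anc_of_dir {α : Type*} [Preorder α] {f : V → α} (hf : ∀ a b, G.Dir a b → f a < f b)
    (h : G.Dir a b) : ¬ G.Anc b a :=
  fun hba => (hf a b h).not_ge (le_of_anc hf hba)

lemma subset_anSet : S ⊆ G.anSet S := fun s hs => ⟨s, hs, .refl⟩

lemma anSet_subset_of_subset_anSet (h : S ⊆ G.anSet T) : G.anSet S ⊆ G.anSet T :=
  fun _ ⟨_, hs, hxs⟩ => let ⟨t, ht, hst⟩ := h hs; ⟨t, ht, hxs.trans hst⟩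

end Ancestors

section MConn

lemma isPath_iff : G.IsPath p ↔ p.Nodup ∧ p.IsChain G.Adj := Iff.rfl

lemma collider_comm : G.Collider a b c ↔ G.Collider c b a := and_comm

lemma IsMConnPath.reverse (h : G.IsMConnPath C p) : G.IsMConnPath C p.reverse := by
  obtain ⟨hpath, htr⟩ := h
  obtain ⟨hnd, hch⟩ := isPath_iff.mp hpath
  refine ⟨⟨List.nodup_reverse.mpr hnd, List.isChain_reverse.mpr (hch.imp fun _ _ h => h.symm)⟩,
    fun a b c h => ?_⟩
  rw [collider_comm]
  exact htr c b a (by simpa using h.reverse)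

lemma mconn_of_adj (h : G.Adj v w) (C : Set V) : G.MConn v w C := by
  refine ⟨[v, w], ⟨isPath_iff.mpr ⟨by simp [h.ne], by simpa using h⟩, ?_⟩, rfl, rfl⟩
  rintro a b c ⟨s, t, hst⟩
  exact absurd (congrArg List.length hst) (by simp; omega)

lemma mconn_of_forall_collider (hnd : p.Nodup) (hch : p.IsChain G.Adj) (hv : p.head? = some v)
    (hw : p.getLast? = some w)
    (hcol : ∀ a b c, ConsecTriple p a b c → G.Collider a b c ∧ b ∈ C) : G.MConn v w C :=
  ⟨p, ⟨⟨hnd, hch⟩, fun a b c h =>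
    ⟨fun _ => ⟨b, (hcol a b c h).2, .refl⟩, fun hn => absurd (hcol a b c h).1 hn⟩⟩, hv, hw⟩

lemma Maximal.adj_of_markovEquiv (hH : H.Maximal) (heq : G.MarkovEquiv H) (h : G.Adj a b) :
    H.Adj a b := by
  by_contra hna
  obtain ⟨C, haC, hbC, hsep⟩ := hH a b h.ne hna
  exact (heq a b C h.ne haC hbC).mpr hsep (mconn_of_adj h C)

def skeletonOn (G : MixedGraph V) (S : Set V) : SimpleGraph V where
  Adj a b := G.Adj a b ∧ a ∈ S ∧ b ∈ S
  symm := ⟨fun _ _ h => ⟨h.1.symm, h.2.2, h.2.1⟩⟩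
  loopless := ⟨fun _ h => h.1.ne rfl⟩

lemma skeletonOn_adj : (G.skeletonOn S).Adj a b ↔ G.Adj a b ∧ a ∈ S ∧ b ∈ S := Iff.rfl

lemma ConsecTriple.mem_of_skeletonOn (h : ConsecTriple p a b c) (hnd : p.Nodup)
    (hch : p.IsChain (G.skeletonOn (insert v (insert w C))).Adj) (hv : p.head? = some v)
    (hw : p.getLast? = some w) : b ∈ C := by
  obtain ⟨-, -, hb⟩ := skeletonOn_adj.mp (h.rel_left hch)
  rcases hb with rfl | rfl | hb
  · exact absurd rfl (h.ne_of_head? hnd hv)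
  · exact absurd rfl (h.ne_of_getLast? hnd hw)
  · exact hb

lemma not_reachable_skeletonOn_of_not_adj (hne : v ≠ w) (hna : ¬ G.Adj v w) :
    ¬ (G.skeletonOn (insert v (insert w ∅))).Reachable v w := by
  rintro ⟨_ | ⟨hvy, -⟩⟩
  · exact hne rfl
  · obtain ⟨hadj, -, hy⟩ := skeletonOn_adj.mp hvy
    simp only [Set.mem_insert_iff, Set.mem_empty_iff_false, or_false] at hy
    rcases hy with rfl | rfl
    · exact hadj.ne rfl
    · exact hna hadj

end MConn

namespace Bidirected

variable (hG : G.Bidirected)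
include hG

lemma not_dir : ¬ G.Dir a b := by
  unfold Dir; rcases hG a b with h | h <;> simp [h]

lemma anSet_eq (C : Set V) : G.anSet C = C := by
  ext x
  refine ⟨fun ⟨c, hc, hxc⟩ => ?_, fun hx => ⟨x, hx, .refl⟩⟩
  rcases hxc.cases_head with rfl | ⟨y, hxy, -⟩
  · exact hc
  · exact absurd hxy hG.not_dir

lemma headAt (h : G.Adj a b) : G.HeadAt a b := Or.inr ((hG a b).resolve_left h)

lemma collider (h : ConsecTriple p a b c) (hch : p.IsChain G.Adj) : G.Collider a b c :=
  ⟨hG.headAt (h.rel_left hch), hG.headAt (h.rel_right hch).symm⟩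

lemma mconn_iff : G.MConn v w C ↔ (G.skeletonOn (insert v (insert w C))).Reachable v w := by
  constructor
  · rintro ⟨p, ⟨hpath, htr⟩, hpv, hpw⟩
    have hch := (isPath_iff.mp hpath).2
    have hS : ∀ b ∈ p, b ∈ insert v (insert w C) := by
      intro b hb
      rcases eq_or_eq_or_consecTriple_of_mem hb hpv hpw with rfl | rfl | ⟨a, c, h⟩
      · exact Set.mem_insert _ _
      · exact Set.mem_insert_of_mem _ (Set.mem_insert _ _)
      · have hbC := (htr a b c h).1 (hG.collider h hch)
        rw [hG.anSet_eq] at hbC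
        exact Set.mem_insert_of_mem _ (Set.mem_insert_of_mem _ hbC)
    exact SimpleGraph.reachable_of_isChain
      (hch.imp_of_mem_imp fun a b ha hb hab => ⟨hab, hS a ha, hS b hb⟩) hpv hpw
  · intro h
    obtain ⟨p, hnd, hch, hpv, hpw⟩ := h.exists_path
    have hchG : p.IsChain G.Adj := hch.imp fun _ _ h => h.1
    exact mconn_of_forall_collider hnd hchG hpv hpw fun a b c h =>
      ⟨hG.collider h hchG, ConsecTriple.mem_of_skeletonOn h hnd hch hpv hpw⟩

lemma msep_empty (hne : v ≠ w) (hna : ¬ G.Adj v w) : G.MSep v w ∅ := by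
  rw [MSep, hG.mconn_iff]
  exact not_reachable_skeletonOn_of_not_adj hne hna

section MarkovEquiv

variable (heq : G.MarkovEquiv H) (hadj : ∀ a b, G.Adj a b → H.Adj a b)
include heq hadj

lemma collider_of_markovEquiv (hxu : G.Adj x u) (huy : G.Adj u y) (hxy : ¬ G.Adj x y)
    (hne : x ≠ y) : H.Collider x u y := by
  by_contra hcol
  refine (heq x y ∅ hne (Set.notMem_empty x) (Set.notMem_empty y)).mp (hG.msep_empty hne hxy)
    ⟨[x, u, y], ⟨isPath_iff.mpr ⟨?_, ?_⟩, fun a b c h => ?_⟩, rfl, rfl⟩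
  · simp [hxu.ne, huy.ne, hne]
  · simp [hadj _ _ hxu, hadj _ _ huy]
  · obtain ⟨rfl, rfl, rfl⟩ := h.eq_of_triple
    exact ⟨fun h => absurd h hcol, fun _ => Set.notMem_empty _⟩

lemma bidir_of_markovEquiv (hvw : G.Adj v w) (h₁ : ¬ G.Bd v ⊆ G.Bd w)
    (h₂ : ¬ G.Bd w ⊆ G.Bd v) : H.Bidir v w := by
  obtain ⟨x, hxv, hxw, hxw'⟩ := hvw.exists_of_not_bd_subset h₁
  obtain ⟨y, hyw, hyv, hyv'⟩ := hvw.symm.exists_of_not_bd_subset h₂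
  exact bidir_iff.mpr ⟨(hG.collider_of_markovEquiv heq hadj hyw hvw.symm hyv hyv').2,
    (hG.collider_of_markovEquiv heq hadj hxv hvw hxw hxw').2⟩

lemma bd_subset_or_of_markovEquiv (hnb : ∀ a b, ¬ H.Bidir a b) (hvw : G.Adj v w) :
    G.Bd v ⊆ G.Bd w ∨ G.Bd w ⊆ G.Bd v := by
  by_contra h
  exact hnb v w (hG.bidir_of_markovEquiv heq hadj hvw (not_or.mp h).1 (not_or.mp h).2)

lemma simplicial_of_undir (hH : H.Ancestral) (h : H.Undir a b) : G.Simplicial a := by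
  by_contra hns
  obtain ⟨x, y, hxa, hay, hxy, hnxy⟩ := exists_adj_adj_of_not_simplicial hns
  exact hH.2.1 a b h x (hG.collider_of_markovEquiv heq hadj hxa hay hnxy hxy).1

end MarkovEquiv

end Bidirected

structure Orients (G K : MixedGraph V) : Prop where
  adj_iff : ∀ a b, K.Adj a b ↔ G.Adj a b
  not_bidir : ∀ a b, ¬ K.Bidir a b
  bd_subset : ∀ a b, K.Adj a b → ¬ K.HeadAt b a → G.Bd a ⊆ G.Bd b
  not_headAt_of_undir : ∀ a b u, K.Undir a b → ¬ K.HeadAt u a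

/-- The invariant of a scan along a path: `x` is dominated by an anchor `r ∈ A`, either
directly, or through some `u ∈ Bd x` when the path enters `x` through an arrowhead from `pr`. -/
def Reached (G K : MixedGraph V) (A : Set V) (pr x : V) : Prop :=
  (∃ r ∈ A, G.Bd x ⊆ G.Bd r) ∨ (K.HeadAt pr x ∧ ∃ r ∈ A, ∃ u ∈ G.Bd x, G.Bd u ⊆ G.Bd r)

lemma Reached.exists_mem_bd (h : Reached G K A pr x) : ∃ r ∈ A, x ∈ G.Bd r := by
  rcases h with ⟨r, hr, hxr⟩ | ⟨-, r, hr, u, hux, hur⟩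
  · exact ⟨r, hr, hxr (self_mem_bd x)⟩
  · exact ⟨r, hr, hur (mem_bd_comm.mp hux)⟩

namespace Orients

variable (hO : Orients G K)
include hO

lemma bd_subset_of_anc (h : K.Anc a b) : G.Bd a ⊆ G.Bd b := by
  induction h with
  | refl => exact subset_rfl
  | tail _ hd ih => exact ih.trans (hO.bd_subset _ _ (dir_iff.mp hd).1.adj (dir_iff.mp hd).2)

lemma headAt_of_not_headAt (hab : K.Adj a b) (hba : ¬ K.HeadAt b a) (hua : K.HeadAt u a) :
    K.HeadAt a b := by
  by_contra hab'
  exact hO.not_headAt_of_undir a b u (undir_iff.mpr ⟨hab, hab', hba⟩) hua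

lemma reached_of_bd_subset (hr : r ∈ A) (hxr : G.Bd x ⊆ G.Bd r) (hxy : K.Adj x y) :
    Reached G K A x y := by
  by_cases hh : K.HeadAt x y
  · exact Or.inr ⟨hh, r, hr, x, mem_bd_comm.mp ((hO.adj_iff x y).mp hxy).mem_bd, hxr⟩
  · exact Or.inl ⟨r, hr, (hO.bd_subset y x hxy.symm hh).trans hxr⟩

section Scan

variable (hA : ∀ r ∈ A, ∀ c ∈ C, c ∈ G.Bd r → c ∈ A)
include hA

lemma reached_step (h : Reached G K A pr x) (hxy : K.Adj x y)
    (hcol : K.Collider pr x y → x ∈ K.anSet C) : Reached G K A x y := by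
  rcases h with ⟨r, hr, hxr⟩ | ⟨hhead, r, hr, u, hux, hur⟩
  · exact hO.reached_of_bd_subset hr hxr hxy
  by_cases hyx : K.HeadAt y x
  · obtain ⟨c, hc, hxc⟩ := hcol ⟨hhead, hyx⟩
    have hxc := hO.bd_subset_of_anc hxc
    exact hO.reached_of_bd_subset (hA r hr c hc (hur (mem_bd_comm.mp (hxc hux)))) hxc hxy
  · exact Or.inr ⟨hO.headAt_of_not_headAt hxy hyx hhead, r, hr, u,
      hO.bd_subset x y hxy hyx hux, hur⟩

lemma exists_mem_bd_of_reached (hch : (pr :: x :: l).IsChain K.Adj)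
    (hcol : ∀ a b c, ConsecTriple (pr :: x :: l) a b c → K.Collider a b c → b ∈ K.anSet C)
    (hw : (x :: l).getLast? = some w) (h : Reached G K A pr x) : ∃ r ∈ A, w ∈ G.Bd r := by
  induction l generalizing pr x with
  | nil =>
    obtain rfl : x = w := by simpa using hw
    exact h.exists_mem_bd
  | cons y l ih =>
    exact ih hch.tail (fun a b c h' => hcol a b c (h'.cons pr)) (by simpa using hw)
      (hO.reached_step hA h (List.isChain_cons_cons.mp hch.tail).1 (hcol pr x y ⟨[], l, rfl⟩))

lemma exists_mem_bd_of_mconn (hv : v ∈ A) (h : K.MConn v w C) : ∃ r ∈ A, w ∈ G.Bd r := by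
  obtain ⟨_ | ⟨v', _ | ⟨x, l⟩⟩, ⟨hpath, htr⟩, hpv, hpw⟩ := h
  · simp at hpv
  · obtain ⟨rfl, rfl⟩ : v' = v ∧ v' = w := by simp_all
    exact ⟨v', hv, self_mem_bd v'⟩
  · obtain rfl : v' = v := by simpa using hpv
    have hch := (isPath_iff.mp hpath).2
    exact hO.exists_mem_bd_of_reached hA hch (fun a b c h => (htr a b c h).1)
      (by simpa using hpw)
      (hO.reached_of_bd_subset hv subset_rfl (List.isChain_cons_cons.mp hch).1)

end Scan

lemma reachable_of_mconn (h : K.MConn v w C) :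
    (G.skeletonOn (insert v (insert w C))).Reachable v w := by
  set S := insert v (insert w C)
  have hstep : ∀ r c, r ∈ S → (G.skeletonOn S).Reachable v r → c ∈ S → c ∈ G.Bd r →
      (G.skeletonOn S).Reachable v c := fun r c hr hvr hc hcr =>
    (mem_bd_iff.mp hcr).elim (fun h => h ▸ hvr)
      (fun h => hvr.trans (SimpleGraph.Adj.reachable ⟨h, hr, hc⟩))
  have hvS : insert v C ⊆ S := Set.insert_subset_insert (Set.subset_insert w C)
  obtain ⟨r, ⟨hrS, hvr⟩, hwr⟩ := hO.exists_mem_bd_of_mconn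
    (A := {r | r ∈ insert v C ∧ (G.skeletonOn S).Reachable v r})
    (fun r hr c hc hcr => ⟨Set.mem_insert_of_mem v hc,
      hstep r c (hvS hr.1) hr.2 (hvS (Set.mem_insert_of_mem v hc)) hcr⟩)
    ⟨Set.mem_insert v C, .refl v⟩ h
  exact hstep r w (hvS hrS) hvr (Set.mem_insert_of_mem v (Set.mem_insert w C)) hwr

lemma mconn_of_reachable (h : (G.skeletonOn (insert v (insert w C))).Reachable v w) :
    K.MConn v w C := by
  obtain ⟨p, hnd, hch, hpv, hpw, hchord⟩ := h.exists_chordless_path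
  have hchK : p.IsChain K.Adj := hch.imp fun a b h => (hO.adj_iff a b).mpr h.1
  refine mconn_of_forall_collider hnd hchK hpv hpw fun a b c h =>
    ⟨?_, ConsecTriple.mem_of_skeletonOn h hnd hch hpv hpw⟩
  have hab := skeletonOn_adj.mp (ConsecTriple.rel_left h hch)
  have hbc := skeletonOn_adj.mp (ConsecTriple.rel_right h hch)
  by_contra hcol
  -- at a non-collider `b`, boundary inclusion produces the chord `a - c`
  refine hchord a b c h ⟨?_, hab.2.1, hbc.2.2⟩
  rcases not_and_or.mp hcol with hab' | hcb'
  · have hba := hO.bd_subset b a ((hO.adj_iff b a).mpr hab.1.symm) hab'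
    exact adj_of_mem_bd (hba hbc.1.mem_bd) (ConsecTriple.ne h hnd).symm
  · have hbc' := hO.bd_subset b c ((hO.adj_iff b c).mpr hbc.1) hcb'
    exact (adj_of_mem_bd (hbc' (mem_bd_comm.mp hab.1.mem_bd)) (ConsecTriple.ne h hnd)).symm

lemma mconn_iff : K.MConn v w C ↔ (G.skeletonOn (insert v (insert w C))).Reachable v w :=
  ⟨hO.reachable_of_mconn, hO.mconn_of_reachable⟩

lemma markovEquiv (hG : G.Bidirected) : G.MarkovEquiv K := fun _ _ _ _ _ _ => by
  rw [MSep, MSep, hG.mconn_iff, hO.mconn_iff]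

lemma maximal : K.Maximal := fun v w hne hna =>
  ⟨∅, Set.notMem_empty v, Set.notMem_empty w, by
    rw [MSep, hO.mconn_iff]
    exact not_reachable_skeletonOn_of_not_adj hne fun h => hna ((hO.adj_iff v w).mpr h)⟩

lemma ancestral {α : Type*} [Preorder α] {f : V → α} (hf : ∀ a b, K.Dir a b → f a < f b) :
    K.Ancestral :=
  ⟨fun _ _ => not_anc_of_dir hf, fun v w h u => hO.not_headAt_of_undir v w u h,
    fun v w h => absurd h (hO.not_bidir v w)⟩

end Orients

namespace IsDAG

variable (hD : D.IsDAG)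
include hD

lemma not_bidir : ¬ D.Bidir a b := by
  unfold Bidir; rcases hD.1 a b with h | h | h <;> simp [h]

lemma not_undir : ¬ D.Undir a b := by
  unfold Undir; rcases hD.1 a b with h | h | h <;> simp [h]

lemma headAt_of_not_headAt (hab : D.Adj a b) (h : ¬ D.HeadAt a b) : D.HeadAt b a := by
  by_contra h'
  exact hD.not_undir (undir_iff.mpr ⟨hab, h, h'⟩)

lemma dir_of_headAt (h : D.HeadAt a b) : D.Dir a b :=
  dir_iff.mpr ⟨h, fun h' => hD.not_bidir (bidir_iff.mpr ⟨h, h'⟩)⟩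

/-- Following the arrows of an m-connecting path, one reaches its end or a collider. -/
lemma mem_anSet_of_dir (hp : D.IsMConnPath C p) (hw : p.getLast? = some w) (hxy : D.Dir x y)
    (hsuf : x :: y :: l <:+ p) : x ∈ D.anSet (insert w C) := by
  induction l generalizing x y with
  | nil =>
    obtain ⟨_, rfl⟩ := hsuf
    obtain rfl : y = w := by simpa using hw
    exact ⟨y, Set.mem_insert y C, .single hxy⟩
  | cons z l ih =>
    have htr : ConsecTriple (x :: y :: z :: l) x y z := ⟨[], l, rfl⟩
    by_cases hcol : D.Collider x y z
    · obtain ⟨c, hc, hyc⟩ := (hp.2 x y z (htr.of_infix hsuf.isInfix)).1 hcol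
      exact ⟨c, Set.mem_insert_of_mem w hc, .head hxy hyc⟩
    · have hzy : D.Adj z y := (htr.rel_right ((isPath_iff.mp hp.1).2.infix hsuf.isInfix)).symm
      have hyz := hD.dir_of_headAt (hD.headAt_of_not_headAt hzy fun h => hcol ⟨hxy.headAt, h⟩)
      obtain ⟨c, hc, hyc⟩ := ih hyz ((List.suffix_cons x _).trans hsuf)
      exact ⟨c, hc, .head hxy hyc⟩

/-- A non-collider inside the path would lie in `C`. -/
lemma collider_of_isMConnPath (hp : D.IsMConnPath (D.anSet {v, w} \ {v, w}) p)
    (hpv : p.head? = some v) (hpw : p.getLast? = some w) (h : ConsecTriple p a b c) :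
    D.Collider a b c := by
  obtain ⟨hnd, hch⟩ := isPath_iff.mp hp.1
  have hanC : ∀ z ∈ ({v, w} : Set V),
      D.anSet (insert z (D.anSet {v, w} \ {v, w})) ⊆ D.anSet {v, w} := fun z hz =>
    anSet_subset_of_subset_anSet (Set.insert_subset (subset_anSet hz) Set.sdiff_subset)
  by_contra hnc
  have hb : b ∈ D.anSet {v, w} := by
    rcases not_and_or.mp hnc with hab | hcb
    · have hba := hD.dir_of_headAt (hD.headAt_of_not_headAt (h.rel_left hch) hab)
      obtain ⟨s, t, hst⟩ := h.reverse
      exact hanC v (by simp) (hD.mem_anSet_of_dir hp.reverse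
        (by rwa [List.getLast?_reverse]) hba (l := t) ⟨s ++ [c], by simp [hst]⟩)
    · have hbc := hD.dir_of_headAt (hD.headAt_of_not_headAt (h.rel_right hch).symm hcb)
      obtain ⟨s, t, hst⟩ := h
      exact hanC w (by simp) (hD.mem_anSet_of_dir hp hpw hbc (l := t) ⟨s ++ [a], by simp [hst]⟩)
  rcases Set.mem_insert_iff.mp (not_not.mp ((hp.2 a b c h).2 hnc <| ⟨hb, ·⟩)) with rfl | hbw
  · exact h.ne_of_head? hnd hpv rfl
  · exact h.ne_of_getLast? hnd hpw hbw

lemma maximal : D.Maximal := by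
  intro v w hne hna
  refine ⟨D.anSet {v, w} \ {v, w}, fun h => h.2 (by simp), fun h => h.2 (by simp), ?_⟩
  rintro ⟨p, hp, hpv, hpw⟩
  have hcol := fun a b c => hD.collider_of_isMConnPath (a := a) (b := b) (c := c) hp hpv hpw
  have hch := (isPath_iff.mp hp.1).2
  rcases p with _ | ⟨x, _ | ⟨b, _ | ⟨y, _ | ⟨d, t⟩⟩⟩⟩
  · simp at hpv
  · exact hne (by simp_all)
  · obtain ⟨rfl, rfl⟩ : x = v ∧ b = w := by simp_all
    exact hna (List.isChain_pair.mp hch)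
  · -- the single inner vertex is a collider `v *→ b ←* w` below `v` or `w`: a directed cycle
    obtain ⟨rfl, rfl⟩ : x = v ∧ y = w := by simp_all
    have hxb := hcol x b y ⟨[], [], rfl⟩
    obtain ⟨z, hz, hbz⟩ := anSet_subset_of_subset_anSet Set.sdiff_subset
      ((hp.2 x b y ⟨[], [], rfl⟩).1 hxb)
    rcases hz with rfl | rfl
    · exact hD.2 z b (hD.dir_of_headAt hxb.1) hbz
    · exact hD.2 z b (hD.dir_of_headAt hxb.2) hbz
  · exact hD.not_bidir (bidir_iff.mpr
      ⟨(hcol b y d ⟨[x], t, rfl⟩).1, (hcol x b y ⟨[], d :: t, rfl⟩).2⟩)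

end IsDAG

section OrientBy

variable {α : Type*} [LinearOrder α] {f : V → α} {hf : Function.Injective f}

open Classical in
noncomputable def orientBy (G : MixedGraph V) (f : V → α) (hf : Function.Injective f) :
    MixedGraph V where
  E v w := if G.Adj v w then (if f v < f w then .arrowTo else .arrowFrom) else .none
  no_loop v := if_neg fun h => h.ne rfl
  symm v w := by
    by_cases hvw : G.Adj v w
    · rcases (hf.ne hvw.ne).lt_or_gt with h | h
      · simp [hvw, hvw.symm, h, h.not_gt, EType.mirror]
      · simp [hvw, hvw.symm, h, h.not_gt, EType.mirror]
    · simp [hvw, mt Adj.symm hvw, EType.mirror]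

open Classical in
lemma orientBy_E : (G.orientBy f hf).E a b =
    if G.Adj a b then (if f a < f b then EType.arrowTo else .arrowFrom) else .none := rfl

lemma orientBy_adj : (G.orientBy f hf).Adj a b ↔ G.Adj a b := by
  show (G.orientBy f hf).E a b ≠ .none ↔ _
  rw [orientBy_E]; split_ifs <;> simp_all

lemma orientBy_headAt : (G.orientBy f hf).HeadAt a b ↔ G.Adj a b ∧ f a < f b := by
  unfold HeadAt; rw [orientBy_E]; split_ifs <;> simp_all

lemma isDAG_orientBy : (G.orientBy f hf).IsDAG :=
  ⟨fun v w => by rw [orientBy_E]; split_ifs <;> simp,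
    fun _ _ => not_anc_of_dir fun _ _ h => (orientBy_headAt.mp h.headAt).2⟩

lemma orients_orientBy (hcomp : ∀ a b, G.Adj a b → G.Bd a ⊆ G.Bd b ∨ G.Bd b ⊆ G.Bd a)
    (hmono : ∀ a b, G.Bd a ⊂ G.Bd b → f a < f b) : Orients G (G.orientBy f hf) where
  adj_iff _ _ := orientBy_adj
  not_bidir a b h := by
    rw [bidir_iff, orientBy_headAt, orientBy_headAt] at h
    exact lt_asymm h.1.2 h.2.2
  bd_subset a b hab hba := by
    rw [orientBy_adj] at hab
    have hlt : f a < f b :=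
      (hf.ne hab.ne).lt_of_le (not_lt.mp fun h => hba (orientBy_headAt.mpr ⟨hab.symm, h⟩))
    rcases hcomp a b hab with h | h
    · exact h
    · exact (h.eq_or_ssubset.resolve_right fun h' => (hmono b a h').not_gt hlt).ge
  not_headAt_of_undir _ _ _ h := absurd h isDAG_orientBy.not_undir

end OrientBy

lemma exists_injective_strictMono_bd [Finite V] (G : MixedGraph V) :
    ∃ f : V → ℕ ×ₗ ℕ, Function.Injective f ∧ ∀ a b, G.Bd a ⊂ G.Bd b → f a < f b := by
  obtain ⟨e, he⟩ := Countable.exists_injective_nat V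
  refine ⟨fun a => toLex ((G.Bd a).ncard, e a),
    fun a b h => he (congrArg Prod.snd (toLex.injective h)),
    fun a b h => Prod.Lex.toLex_lt_toLex.mpr (Or.inl ?_)⟩
  exact Set.ncard_lt_ncard h (Set.toFinite _)

section Drop

lemma drop_E : G.drop.E a b = G.dropE a b := rfl

lemma drop_adj : G.drop.Adj a b ↔ G.Adj a b := by
  unfold Adj; rw [drop_E, dropE]; cases G.E a b <;> simp <;> split_ifs <;> simp

lemma drop_headAt : G.drop.HeadAt a b ↔ G.HeadAt a b ∧ ¬ G.Simplicial b := by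
  unfold HeadAt; rw [drop_E, dropE]; cases G.E a b <;> simp <;> split_ifs <;> simp_all

lemma Orients.drop (hO : Orients G K) : Orients G K.drop where
  adj_iff a b := drop_adj.trans (hO.adj_iff a b)
  not_bidir a b h := by
    rw [bidir_iff, drop_headAt, drop_headAt] at h
    exact hO.not_bidir a b (bidir_iff.mpr ⟨h.1.1, h.2.1⟩)
  bd_subset a b hab hba := by
    rw [drop_adj] at hab
    by_cases h : K.HeadAt b a
    · have hsa : K.Simplicial a := not_not.mp fun hs => hba (drop_headAt.mpr ⟨h, hs⟩)
      exact ((simplicial_congr hO.adj_iff).mp hsa).bd_subset ((hO.adj_iff a b).mp hab)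
    · exact hO.bd_subset a b hab h
  not_headAt_of_undir a b u h hua := by
    obtain ⟨hab, hab', hba'⟩ := undir_iff.mp h
    rw [drop_adj] at hab
    rw [drop_headAt] at hab' hba' hua
    have hba : ¬ K.HeadAt b a := fun h => hba' ⟨h, hua.2⟩
    have hsb := (simplicial_congr hO.adj_iff).mp
      (not_not.mp fun hs => hab' ⟨hO.headAt_of_not_headAt hab hba hua.1, hs⟩)
    have hbd := subset_antisymm (hsb.bd_subset ((hO.adj_iff a b).mp hab).symm)
      (hO.bd_subset a b hab hba)
    exact hua.2 ((simplicial_congr hO.adj_iff).mpr (hsb.of_bd_eq hbd))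

end Drop

section Arrowheads

lemma arr_eq_ncard_headAt [Finite V] (K : MixedGraph V) :
    K.arr = {p : V × V | K.HeadAt p.1 p.2}.ncard := by
  have hdisj : Disjoint {p : V × V | K.Dir p.1 p.2} {p : V × V | K.Bidir p.1 p.2} :=
    Set.disjoint_left.mpr fun p h₁ h₂ => by simp_all [Dir, Bidir]
  rw [arr, ← Set.ncard_union_eq hdisj (Set.toFinite _) (Set.toFinite _)]
  rfl

/-- Sending each arrowhead of `K` to an arrowhead of `H` on the same edge is injective, and
misses one of the two arrowheads of `v ↔ w`. -/
lemma arr_lt_arr [Finite V] (hK : ∀ a b, ¬ K.Bidir a b)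
    (hKH : ∀ a b, K.HeadAt a b → H.HeadAt a b ∨ H.HeadAt b a) (hvw : H.Bidir v w) :
    K.arr < H.arr := by
  classical
  set φ : V × V → V × V := fun p => if H.HeadAt p.1 p.2 then p else p.swap
  have hK' : ∀ p : V × V, K.HeadAt p.1 p.2 → ¬ K.HeadAt p.2 p.1 := fun p h h' =>
    hK p.1 p.2 (bidir_iff.mpr ⟨h, h'⟩)
  have hφ : ∀ p, K.HeadAt p.1 p.2 → H.HeadAt (φ p).1 (φ p).2 := fun p hp => by
    by_cases h : H.HeadAt p.1 p.2
    · simp [φ, h]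
    · simpa [φ, h] using (hKH _ _ hp).resolve_left h
  have hinj : Set.InjOn φ {p | K.HeadAt p.1 p.2} := by
    intro p hp q hq hpq
    by_cases h₁ : H.HeadAt p.1 p.2 <;> by_cases h₂ : H.HeadAt q.1 q.2 <;>
      simp only [φ, h₁, h₂, if_true, if_false] at hpq
    · exact hpq
    · subst hpq; exact absurd hp (hK' q hq)
    · subst hpq; exact absurd hq (hK' p hp)
    · exact Prod.swap_injective hpq
  obtain ⟨t, htH, htH', htK⟩ : ∃ t : V × V,
      H.HeadAt t.1 t.2 ∧ H.HeadAt t.2 t.1 ∧ ¬ K.HeadAt t.1 t.2 := by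
    obtain ⟨h₁, h₂⟩ := bidir_iff.mp hvw
    by_cases h : K.HeadAt v w
    · exact ⟨(w, v), h₂, h₁, hK' (v, w) h⟩
    · exact ⟨(v, w), h₁, h₂, h⟩
  have hnt : ∀ p, K.HeadAt p.1 p.2 → φ p ≠ t := by
    intro p hp hpt
    by_cases h : H.HeadAt p.1 p.2
    · simp only [φ, h, if_true] at hpt
      exact htK (hpt ▸ hp)
    · simp only [φ, h, if_false] at hpt
      subst hpt
      exact h htH'
  calc K.arr = {p : V × V | K.HeadAt p.1 p.2}.ncard := arr_eq_ncard_headAt K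
    _ ≤ ({p : V × V | H.HeadAt p.1 p.2} \ {t}).ncard :=
      Set.ncard_le_ncard_of_injOn φ (fun p hp => ⟨hφ p hp, hnt p hp⟩) hinj (Set.toFinite _)
    _ < {p : V × V | H.HeadAt p.1 p.2}.ncard := Set.ncard_sdiff_singleton_lt_of_mem htH
    _ = H.arr := (arr_eq_ncard_headAt H).symm

end Arrowheads

end MixedGraph

open MixedGraph in
/-- A bi-directed graph `G` is Markov equivalent to a DAG
iff a minimally oriented graph of `G` contains no bi-directed edges. -/
theorem stmt16 {V : Type} [Finite V] (G Gm : MixedGraph V) (hG : G.Bidirected)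
    (hmin : MinOriented G Gm) :
    (∃ D : MixedGraph V, D.IsDAG ∧ G.MarkovEquiv D) ↔ ∀ v w, ¬ Gm.Bidir v w := by
  obtain ⟨hanc, hmax, heq, hopt⟩ := hmin
  have hskel : ∀ a b, G.Adj a b → Gm.Adj a b := fun _ _ => hmax.adj_of_markovEquiv heq
  obtain ⟨f, hf, hmono⟩ := G.exists_injective_strictMono_bd
  constructor
  · rintro ⟨D, hD, hGD⟩ v w hvw
    have hcomp : ∀ a b, G.Adj a b → G.Bd a ⊆ G.Bd b ∨ G.Bd b ⊆ G.Bd a := fun _ _ =>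
      hG.bd_subset_or_of_markovEquiv hGD (fun _ _ => hD.maximal.adj_of_markovEquiv hGD)
        (fun _ _ => hD.not_bidir)
    have hO := (orients_orientBy (hf := hf) hcomp hmono).drop
    refine (arr_lt_arr hO.not_bidir (fun a b hab => ?_) hvw).not_ge
      (hopt _ (hO.ancestral fun _ _ h => (orientBy_headAt.mp (drop_headAt.mp h.headAt).1).2)
        hO.maximal (hO.markovEquiv hG))
    -- `Gm` has undirected edges only between simplicial vertices
    obtain ⟨hab, hb⟩ := drop_headAt.mp hab
    have hGab := orientBy_adj.mp hab.adj
    by_contra h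
    refine hb ((simplicial_congr fun _ _ => orientBy_adj).mpr
      (hG.simplicial_of_undir heq hskel hanc (undir_iff.mpr ⟨(hskel a b hGab).symm, ?_, ?_⟩)))
    · exact fun h' => h (Or.inr h')
    · exact fun h' => h (Or.inl h')
  · intro hnb
    exact ⟨G.orientBy f hf, isDAG_orientBy, (orients_orientBy
      (fun _ _ => hG.bd_subset_or_of_markovEquiv heq hskel hnb) hmono).markovEquiv hG⟩
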